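/- arXiv:1310.5715 — 2 statements merged into one kernel-verified Lean document; each statement's English description precedes it below -/
import Mathlib

section
/- With step size γ = με/(2εμ·supL + 2σ²), after k = ⌈2·log(2ε₀/ε)·(supL/μ + σ²/(μ²ε))⌉ SGD iterations, E‖x_k - x⋆‖² ≤ ε, where ε₀ = ‖x_0 - x⋆‖². -/
/-!
Each `f i` is convex with `supL`-Lipschitz gradient, so its gradient is co-coercive (compare the
first-order lower bound with the descent lemma at a gradient step). Hence the second moment of the
stochastic gradient is at most `2 supL ⟪x - x⋆, ∇F x⟫ + 2σ²`, and with strong monotonicity of `∇F`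
one SGD step contracts the expected squared distance by `ρ = 1 - 2γμ(1 - γ supL) ≤ 1 - γμ` up to
the noise `2γ²σ²`, whose fixed point is at most `ε / 2` for the chosen `γ`. Iterating along the
sampling paths, `E ‖x_k - x⋆‖² ≤ (1 - γμ)^k ε₀ + ε / 2`, and the choice of `k` makes the first
term at most `ε / 2` as well.
-/

open scoped RealInnerProductSpace BigOperators

section SmoothConvex

variable {E : Type*} [NormedAddCommGroup E] [InnerProductSpace ℝ E] [CompleteSpace E]
  {f : E → ℝ}

theorem hasDerivAt_comp_add_smul (hf : Differentiable ℝ f) (x v : E) (t : ℝ) :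
    HasDerivAt (fun s : ℝ => f (x + s • v)) ⟪gradient f (x + t • v), v⟫ t := by
  have hline : HasDerivAt (fun s : ℝ => x + s • v) v t := by
    simpa using ((hasDerivAt_id t).smul_const v).const_add x
  rw [inner_gradient_left]
  exact (hf _).hasFDerivAt.comp_hasDerivAt t hline

theorem ConvexOn.add_inner_gradient_le (hc : ConvexOn ℝ Set.univ f) (hf : Differentiable ℝ f)
    (x y : E) : f x + ⟪gradient f x, y - x⟫ ≤ f y := by
  have hline : ConvexOn ℝ Set.univ (fun t : ℝ => f (x + t • (y - x))) := by
    have hcomp : (fun t : ℝ => f (x + t • (y - x))) = f ∘ AffineMap.lineMap x y := by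
      funext t
      simp [AffineMap.lineMap_apply, add_comm]
    simpa [hcomp] using hc.comp_affineMap (AffineMap.lineMap x y)
  have := hline.le_slope_of_hasDerivAt (Set.mem_univ 0) (Set.mem_univ 1) zero_lt_one
    (by simpa only [zero_smul, add_zero] using hasDerivAt_comp_add_smul hf x (y - x) 0)
  simp only [slope_def_field, one_smul, zero_smul, add_zero, add_sub_cancel, sub_zero,
    div_one] at this
  linarith

theorem le_add_inner_gradient_add_sq (hf : Differentiable ℝ f) {L : ℝ}
    (hlip : ∀ a b, ‖gradient f a - gradient f b‖ ≤ L * ‖a - b‖) (x y : E) :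
    f y ≤ f x + ⟪gradient f x, y - x⟫ + L / 2 * ‖y - x‖ ^ 2 := by
  set v := y - x
  set h : ℝ → ℝ := fun t => f (x + t • v) - t * ⟪gradient f x, v⟫ - L / 2 * ‖v‖ ^ 2 * t ^ 2
  have hderiv : ∀ t, HasDerivAt h
      (⟪gradient f (x + t • v), v⟫ - ⟪gradient f x, v⟫ - L / 2 * ‖v‖ ^ 2 * (2 * t)) t :=
    fun t => by
      refine (((hasDerivAt_comp_add_smul hf x v t).sub
        (hasDerivAt_mul_const ⟪gradient f x, v⟫)).sub
        ((hasDerivAt_pow 2 t).const_mul (L / 2 * ‖v‖ ^ 2))).congr_deriv ?_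
      norm_num
  have hanti : AntitoneOn h (Set.Icc 0 1) := by
    refine antitoneOn_of_deriv_nonpos (convex_Icc 0 1)
      (HasDerivAt.continuousOn fun t _ => hderiv t)
      (fun t _ => (hderiv t).differentiableAt.differentiableWithinAt) fun t ht => ?_
    rw [interior_Icc] at ht
    have : ⟪gradient f (x + t • v) - gradient f x, v⟫ ≤ L * t * ‖v‖ ^ 2 :=
      calc _ ≤ ‖gradient f (x + t • v) - gradient f x‖ * ‖v‖ := real_inner_le_norm _ _
        _ ≤ L * ‖x + t • v - x‖ * ‖v‖ := by gcongr; exact hlip _ _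
        _ = L * t * ‖v‖ ^ 2 := by
          rw [add_sub_cancel_left, norm_smul, Real.norm_of_nonneg ht.1.le]; ring
    rw [inner_sub_left] at this
    rw [(hderiv t).deriv]
    linarith
  have := hanti (Set.left_mem_Icc.2 zero_le_one) (Set.right_mem_Icc.2 zero_le_one) zero_le_one
  simp only [h, one_smul, zero_smul, add_zero, one_mul, zero_mul, one_pow, mul_one,
    sub_zero, ne_eq, OfNat.ofNat_ne_zero, not_false_eq_true, zero_pow, mul_zero] at this
  rw [show x + v = y from add_sub_cancel x y] at this
  linarith

theorem ConvexOn.norm_gradient_sub_sq_le_two_mul (hc : ConvexOn ℝ Set.univ f)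
    (hf : Differentiable ℝ f) {L : ℝ} (hL : 0 < L)
    (hlip : ∀ a b, ‖gradient f a - gradient f b‖ ≤ L * ‖a - b‖) (x y : E) :
    ‖gradient f x - gradient f y‖ ^ 2 ≤ 2 * L * (f x - f y - ⟪gradient f y, x - y⟫) := by
  set g := gradient f x - gradient f y
  -- compare both first-order bounds at the gradient step `z` taken from `x`
  set z := x - L⁻¹ • g
  have hlower := hc.add_inner_gradient_le hf y z
  have hupper := le_add_inner_gradient_add_sq hf hlip x z
  have hzx : z - x = -(L⁻¹ • g) := by simp [z]
  have hzy : z - y = (x - y) - L⁻¹ • g := by simp only [z]; abel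
  rw [hzx, norm_neg, norm_smul, Real.norm_of_nonneg (inv_nonneg.2 hL.le), inner_neg_right,
    inner_smul_right] at hupper
  rw [hzy, inner_sub_right, inner_smul_right] at hlower
  have hg : L⁻¹ * ⟪gradient f x, g⟫ - L⁻¹ * ⟪gradient f y, g⟫ = L⁻¹ * ‖g‖ ^ 2 := by
    rw [← mul_sub, ← inner_sub_left, real_inner_self_eq_norm_sq]
  have key : L⁻¹ * ‖g‖ ^ 2 / 2 ≤ f x - f y - ⟪gradient f y, x - y⟫ := by
    have : L / 2 * (L⁻¹ * ‖g‖) ^ 2 = L⁻¹ * ‖g‖ ^ 2 / 2 := by field_simp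
    linarith
  calc ‖g‖ ^ 2 = 2 * L * (L⁻¹ * ‖g‖ ^ 2 / 2) := by field_simp
    _ ≤ _ := by gcongr

theorem ConvexOn.norm_gradient_sub_sq_le (hc : ConvexOn ℝ Set.univ f)
    (hf : Differentiable ℝ f) {L : ℝ} (hL : 0 < L)
    (hlip : ∀ a b, ‖gradient f a - gradient f b‖ ≤ L * ‖a - b‖) (x y : E) :
    ‖gradient f x - gradient f y‖ ^ 2 ≤ L * ⟪x - y, gradient f x - gradient f y⟫ := by
  have hxy := hc.norm_gradient_sub_sq_le_two_mul hf hL hlip x y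
  have hyx := hc.norm_gradient_sub_sq_le_two_mul hf hL hlip y x
  rw [norm_sub_rev] at hyx
  have : ⟪x - y, gradient f x - gradient f y⟫
      = -⟪gradient f x, y - x⟫ - ⟪gradient f y, x - y⟫ := by
    rw [inner_sub_right, real_inner_comm, real_inner_comm (gradient f y), ← inner_neg_right,
      neg_sub]
  nlinarith

theorem ConvexOn.norm_gradient_sq_le (hc : ConvexOn ℝ Set.univ f)
    (hf : Differentiable ℝ f) {L : ℝ} (hL : 0 < L)
    (hlip : ∀ a b, ‖gradient f a - gradient f b‖ ≤ L * ‖a - b‖) (x y : E) :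
    ‖gradient f x‖ ^ 2 ≤ 2 * L * ⟪x - y, gradient f x - gradient f y⟫ + 2 * ‖gradient f y‖ ^ 2 :=
  calc ‖gradient f x‖ ^ 2 = ‖(gradient f x - gradient f y) + gradient f y‖ ^ 2 := by
        rw [sub_add_cancel]
    _ ≤ (‖gradient f x - gradient f y‖ + ‖gradient f y‖) ^ 2 := by gcongr; exact norm_add_le _ _
    _ ≤ 2 * (‖gradient f x - gradient f y‖ ^ 2 + ‖gradient f y‖ ^ 2) := add_sq_le
    _ ≤ _ := by linarith [hc.norm_gradient_sub_sq_le hf hL hlip x y]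

theorem gradient_eq_zero_of_forall_le {x : E} (hmin : ∀ y, f x ≤ f y) : gradient f x = 0 := by
  rw [gradient, IsLocalMin.fderiv_eq_zero (Filter.Eventually.of_forall hmin), map_zero]

end SmoothConvex

theorem norm_sub_smul_sub_sq {E : Type*} [NormedAddCommGroup E] [InnerProductSpace ℝ E]
    (x g y : E) (γ : ℝ) :
    ‖x - γ • g - y‖ ^ 2 = ‖x - y‖ ^ 2 - 2 * γ * ⟪x - y, g⟫ + γ ^ 2 * ‖g‖ ^ 2 := by
  rw [sub_right_comm, norm_sub_sq_real, inner_smul_right, norm_smul, mul_pow, Real.norm_eq_abs,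
    sq_abs]
  ring

theorem le_of_strongly_monotone_of_lipschitz {E : Type*} [NormedAddCommGroup E]
    [InnerProductSpace ℝ E] [Nontrivial E] {G : E → E} {μ L : ℝ}
    (hmono : ∀ x y, μ * ‖x - y‖ ^ 2 ≤ ⟪x - y, G x - G y⟫)
    (hlip : ∀ x y, ‖G x - G y‖ ≤ L * ‖x - y‖) : μ ≤ L := by
  obtain ⟨v, hv⟩ := exists_ne (0 : E)
  refine le_of_mul_le_mul_right ?_ (pow_pos (norm_pos_iff.2 hv) 2)
  calc μ * ‖v‖ ^ 2 ≤ ⟪v, G v - G 0⟫ := by simpa using hmono v 0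
    _ ≤ ‖v‖ * ‖G v - G 0‖ := real_inner_le_norm _ _
    _ ≤ ‖v‖ * (L * ‖v‖) := by gcongr; simpa using hlip v 0
    _ = L * ‖v‖ ^ 2 := by ring

section WeightedFamily

variable {ι : Type*} [Fintype ι] {p : ι → ℝ}

theorem norm_sum_smul_sub_le {E : Type*} [SeminormedAddCommGroup E] [NormedSpace ℝ E]
    {G : ι → E → E} {L : ℝ} (hp : ∀ i, 0 ≤ p i) (hps : ∑ i, p i = 1)
    (hG : ∀ i a b, ‖G i a - G i b‖ ≤ L * ‖a - b‖) (a b : E) :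
    ‖∑ i, p i • G i a - ∑ i, p i • G i b‖ ≤ L * ‖a - b‖ :=
  calc ‖∑ i, p i • G i a - ∑ i, p i • G i b‖ = ‖∑ i, p i • (G i a - G i b)‖ := by
        simp only [smul_sub, Finset.sum_sub_distrib]
    _ ≤ ∑ i, p i * (L * ‖a - b‖) := by
        refine (norm_sum_le _ _).trans (Finset.sum_le_sum fun i _ => ?_)
        rw [norm_smul, Real.norm_of_nonneg (hp i)]
        exact mul_le_mul_of_nonneg_left (hG i a b) (hp i)
    _ = L * ‖a - b‖ := by rw [← Finset.sum_mul, hps, one_mul]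

variable {E : Type*} [NormedAddCommGroup E] [InnerProductSpace ℝ E] [CompleteSpace E]
  {f : ι → E → ℝ}

theorem gradient_sum_mul (hf : ∀ i, Differentiable ℝ (f i)) (x : E) :
    gradient (fun y => ∑ i, p i * f i y) x = ∑ i, p i • gradient (f i) x := by
  refine HasGradientAt.gradient ?_
  rw [hasGradientAt_iff_hasFDerivAt, map_sum]
  refine HasFDerivAt.fun_sum fun i _ => ?_
  rw [map_smul]
  exact (hasGradientAt_iff_hasFDerivAt.mp (hf i x).hasGradientAt).const_mul (p i)

theorem sum_mul_norm_sgd_step_sub_sq_le {L μ γ : ℝ} {x xstar : E} (hp : ∀ i, 0 ≤ p i)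
    (hps : ∑ i, p i = 1) (hc : ∀ i, ConvexOn ℝ Set.univ (f i))
    (hf : ∀ i, Differentiable ℝ (f i)) (hL : 0 < L)
    (hlip : ∀ i a b, ‖gradient (f i) a - gradient (f i) b‖ ≤ L * ‖a - b‖)
    (hopt : ∑ i, p i • gradient (f i) xstar = 0)
    (hsc : μ * ‖x - xstar‖ ^ 2 ≤ ⟪x - xstar, ∑ i, p i • gradient (f i) x⟫)
    (hγ : 0 ≤ γ) (hγL : γ * L ≤ 1 / 2) :
    ∑ i, p i * ‖x - γ • gradient (f i) x - xstar‖ ^ 2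
      ≤ (1 - 2 * γ * μ * (1 - γ * L)) * ‖x - xstar‖ ^ 2
        + 2 * γ ^ 2 * ∑ i, p i * ‖gradient (f i) xstar‖ ^ 2 := by
  set I := ⟪x - xstar, ∑ i, p i • gradient (f i) x⟫
  set S := ∑ i, p i * ‖gradient (f i) x‖ ^ 2
  set σ2 := ∑ i, p i * ‖gradient (f i) xstar‖ ^ 2
  have hI : ∑ i, p i * ⟪x - xstar, gradient (f i) x - gradient (f i) xstar⟫ = I := by
    show _ = ⟪x - xstar, ∑ i, p i • gradient (f i) x⟫
    rw [← sub_zero (∑ i, p i • gradient (f i) x), ← hopt]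
    simp only [← Finset.sum_sub_distrib, ← smul_sub, inner_sum, inner_smul_right]
  have hS : S ≤ 2 * L * I + 2 * σ2 := by
    rw [← hI, Finset.mul_sum, Finset.mul_sum, ← Finset.sum_add_distrib]
    refine Finset.sum_le_sum fun i _ => ?_
    have := mul_le_mul_of_nonneg_left
      ((hc i).norm_gradient_sq_le (hf i) hL (hlip i) x xstar) (hp i)
    linarith
  have hexpand : ∑ i, p i * ‖x - γ • gradient (f i) x - xstar‖ ^ 2
      = ‖x - xstar‖ ^ 2 - 2 * γ * I + γ ^ 2 * S := by
    calc _ = ∑ i, (p i * ‖x - xstar‖ ^ 2 - 2 * γ * (p i * ⟪x - xstar, gradient (f i) x⟫)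
          + γ ^ 2 * (p i * ‖gradient (f i) x‖ ^ 2)) :=
          Finset.sum_congr rfl fun i _ => by rw [norm_sub_smul_sub_sq]; ring
      _ = _ := by
          rw [Finset.sum_add_distrib, Finset.sum_sub_distrib, ← Finset.sum_mul,
            ← Finset.mul_sum, ← Finset.mul_sum, hps, one_mul]
          simp only [I, S, inner_sum, inner_smul_right]
  have hdamp : 0 ≤ 2 * γ * (1 - γ * L) := by nlinarith
  rw [hexpand]
  nlinarith [mul_le_mul_of_nonneg_left hS (sq_nonneg γ), mul_le_mul_of_nonneg_left hsc hdamp]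

end WeightedFamily

section Paths

variable {ι : Type*} [Fintype ι] {p : ι → ℝ}

theorem sum_prod_weights_eq_one (hps : ∑ i, p i = 1) (m : ℕ) :
    ∑ s : Fin m → ι, ∏ j, p (s j) = 1 := by
  rw [← Fintype.sum_pow, hps, one_pow]

theorem sum_paths_succ {m : ℕ} (g : (Fin (m + 1) → ι) → ℝ) :
    ∑ s : Fin (m + 1) → ι, (∏ j, p (s j)) * g s
      = ∑ s : Fin m → ι, (∏ j, p (s j)) * ∑ i, p i * g (Fin.snoc s i) := by
  rw [← (Fin.snocEquiv fun _ => ι).sum_comp, Fintype.sum_prod_type, Finset.sum_comm]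
  refine Finset.sum_congr rfl fun s _ => ?_
  rw [Finset.mul_sum]
  refine Finset.sum_congr rfl fun i _ => ?_
  change (∏ j, p (Fin.snoc (α := fun _ => ι) s i j)) * g (Fin.snoc s i) = _
  simp only [Fin.prod_univ_castSucc, Fin.snoc_castSucc, Fin.snoc_last]
  ring

theorem sum_paths_succ_le (hp : ∀ i, 0 ≤ p i) (hps : ∑ i, p i = 1) {m : ℕ}
    {φ : (Fin (m + 1) → ι) → ℝ} {ψ : (Fin m → ι) → ℝ} {ρ c : ℝ}
    (h : ∀ s, ∑ i, p i * φ (Fin.snoc s i) ≤ ρ * ψ s + c) :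
    ∑ s, (∏ j, p (s j)) * φ s ≤ ρ * ∑ s, (∏ j, p (s j)) * ψ s + c :=
  calc ∑ s, (∏ j, p (s j)) * φ s ≤ ∑ s : Fin m → ι, (∏ j, p (s j)) * (ρ * ψ s + c) := by
        rw [sum_paths_succ]
        exact Finset.sum_le_sum fun s _ =>
          mul_le_mul_of_nonneg_left (h s) (Finset.prod_nonneg fun j _ => hp (s j))
    _ = ρ * ∑ s, (∏ j, p (s j)) * ψ s + c := by
        simp only [mul_add, Finset.sum_add_distrib, ← Finset.sum_mul,
          sum_prod_weights_eq_one hps, one_mul, Finset.mul_sum, mul_left_comm ρ]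

end Paths

-- `∑ s, (∏ j, p (s j)) * φ (traj m s)` is the expectation of `φ (x_m)` over i.i.d. samples
-- `s j ∼ p`.
theorem sum_paths_le_pow_mul_add {ι X : Type*} [Fintype ι] {p : ι → ℝ} (hp : ∀ i, 0 ≤ p i)
    (hps : ∑ i, p i = 1) {φ : X → ℝ} (hφ : ∀ y, 0 ≤ φ y) {step : ι → X → X}
    {traj : ∀ m : ℕ, (Fin m → ι) → X} {x0 : X} (htraj0 : ∀ s, traj 0 s = x0)
    (htrajS : ∀ m (s : Fin (m + 1) → ι),
      traj (m + 1) s = step (s (Fin.last m)) (traj m (s ∘ Fin.castSucc)))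
    {ρ r c b : ℝ} (hρ : 0 ≤ ρ) (hρr : ρ ≤ r) (hb : 0 ≤ b) (hc : c ≤ (1 - ρ) * b)
    (hdrift : ∀ y, ∑ i, p i * φ (step i y) ≤ ρ * φ y + c) (m : ℕ) :
    ∑ s : Fin m → ι, (∏ j, p (s j)) * φ (traj m s) ≤ r ^ m * φ x0 + b := by
  induction m with
  | zero => simpa [htraj0] using hb
  | succ m ih =>
    have hstep := sum_paths_succ_le hp hps (φ := fun s => φ (traj (m + 1) s))
      (ψ := fun s => φ (traj m s)) fun s => by
        simpa only [htrajS, Fin.snoc_last, Fin.snoc_comp_castSucc] using hdrift (traj m s)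
    have hdecay : ρ * (r ^ m * φ x0) ≤ r ^ (m + 1) * φ x0 := by
      rw [pow_succ, mul_comm (r ^ m) r, mul_assoc]
      exact mul_le_mul_of_nonneg_right hρr (mul_nonneg (pow_nonneg (hρ.trans hρr) m) (hφ x0))
    nlinarith [mul_le_mul_of_nonneg_left ih hρ]

theorem one_sub_pow_mul_le {a x y : ℝ} {k : ℕ} (ha : a ≤ 1) (hx : 0 < x) (hy : 0 < y)
    (hk : Real.log (x / y) ≤ a * k) : (1 - a) ^ k * x ≤ y := by
  have hexp : (1 - a) ^ k ≤ y / x :=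
    calc (1 - a) ^ k ≤ Real.exp (-a) ^ k :=
          pow_le_pow_left₀ (by linarith) (Real.one_sub_le_exp_neg a) k
      _ = Real.exp (-(a * k)) := by rw [← Real.exp_nat_mul]; ring_nf
      _ ≤ Real.exp (Real.log (y / x)) := by
          rw [← inv_div, Real.log_inv]
          exact Real.exp_le_exp.2 (neg_le_neg hk)
      _ = y / x := Real.exp_log (div_pos hy hx)
  calc (1 - a) ^ k * x ≤ y / x * x := by gcongr
    _ = y := div_mul_cancel₀ y hx.ne'

theorem contraction_factor_bounds {γ μ L : ℝ} (hγ : 0 ≤ γ) (hμ : 0 ≤ μ) (hμL : μ ≤ L)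
    (hγL : γ * L ≤ 1 / 2) :
    0 ≤ 1 - 2 * γ * μ * (1 - γ * L) ∧ 1 - 2 * γ * μ * (1 - γ * L) ≤ 1 - γ * μ := by
  have hγμ : 0 ≤ γ * μ := mul_nonneg hγ hμ
  have hγμL : γ * μ ≤ γ * L := mul_le_mul_of_nonneg_left hμL hγ
  constructor <;> nlinarith [mul_nonneg hγμ (hγμ.trans hγμL), mul_le_mul_of_nonneg_left hγL hγμ]

section StepSize

variable {μ ε L σ2 γ : ℝ}

theorem stepSize_pos (hμ : 0 < μ) (hε : 0 < ε) (hL : 0 < L) (hσ2 : 0 ≤ σ2)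
    (hγ : γ = μ * ε / (2 * ε * μ * L + 2 * σ2)) : 0 < γ := by
  rw [hγ]; positivity

theorem stepSize_mul_le (hμ : 0 < μ) (hε : 0 < ε) (hL : 0 < L) (hσ2 : 0 ≤ σ2)
    (hγ : γ = μ * ε / (2 * ε * μ * L + 2 * σ2)) : γ * L ≤ 1 / 2 := by
  rw [hγ, div_mul_eq_mul_div, div_le_iff₀ (by positivity)]
  nlinarith [mul_pos hμ hε]

theorem stepSize_noise_le (hμ : 0 < μ) (hε : 0 < ε) (hL : 0 < L) (hσ2 : 0 ≤ σ2)
    (hγ : γ = μ * ε / (2 * ε * μ * L + 2 * σ2)) :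
    2 * γ ^ 2 * σ2 ≤ 2 * γ * μ * (1 - γ * L) * (ε / 2) := by
  have hγ0 := stepSize_pos hμ hε hL hσ2 hγ
  have hdef : γ * (2 * ε * μ * L + 2 * σ2) = μ * ε := by
    rw [hγ]; field_simp
  nlinarith [mul_pos (mul_pos hγ0 hγ0) (mul_pos (mul_pos hμ hε) hL)]

theorem le_stepSize_mul_of_le (hμ : 0 < μ) (hε : 0 < ε) (hL : 0 < L) (hσ2 : 0 ≤ σ2)
    (hγ : γ = μ * ε / (2 * ε * μ * L + 2 * σ2)) {A t : ℝ}
    (ht : 2 * A * (L / μ + σ2 / (μ ^ 2 * ε)) ≤ t) : A ≤ γ * μ * t := by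
  have hinv : γ * μ * (2 * (L / μ + σ2 / (μ ^ 2 * ε))) = 1 := by
    rw [hγ]; field_simp
  have hγμ : 0 ≤ γ * μ := (mul_pos (stepSize_pos hμ hε hL hσ2 hγ) hμ).le
  calc A = γ * μ * (2 * A * (L / μ + σ2 / (μ ^ 2 * ε))) := by linear_combination -A * hinv
    _ ≤ γ * μ * t := mul_le_mul_of_nonneg_left ht hγμ

end StepSize

theorem stmt6_general {d n : ℕ}
    (f : Fin n → EuclideanSpace ℝ (Fin d) → ℝ)
    (L : Fin n → ℝ) (supL μ γ ε ε₀ : ℝ)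
    (p : Fin n → ℝ) (hp : ∀ i, 0 ≤ p i) (hps : ∑ i, p i = 1)
    (hconv : ∀ i, ConvexOn ℝ Set.univ (f i))
    (hdiff : ∀ i, Differentiable ℝ (f i))
    (hlip : ∀ i x y, ‖gradient (f i) x - gradient (f i) y‖ ≤ L i * ‖x - y‖)
    (hLsup : ∀ i, L i ≤ supL) (hsupL : 0 < supL)
    (F : EuclideanSpace ℝ (Fin d) → ℝ) (hF : F = fun x => ∑ i, p i * f i x)
    (hμ : 0 < μ)
    (hsc : ∀ x y, μ * ‖x - y‖ ^ 2 ≤ ⟪x - y, gradient F x - gradient F y⟫)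
    (xstar : EuclideanSpace ℝ (Fin d)) (hmin : ∀ x, F xstar ≤ F x)
    (σ2 : ℝ) (hσ2 : σ2 = ∑ i, p i * ‖gradient (f i) xstar‖ ^ 2)
    (x0 : EuclideanSpace ℝ (Fin d)) (hε₀ : ε₀ = ‖x0 - xstar‖ ^ 2)
    (hε : 0 < ε) (hεsmall : ε < 2 * ε₀)
    (hγ : γ = μ * ε / (2 * ε * μ * supL + 2 * σ2))
    (traj : ∀ k : ℕ, (Fin k → Fin n) → EuclideanSpace ℝ (Fin d))
    (htraj0 : ∀ s, traj 0 s = x0)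
    (htrajS : ∀ k (s : Fin (k + 1) → Fin n),
      traj (k + 1) s = traj k (s ∘ Fin.castSucc) -
        γ • gradient (f (s (Fin.last k))) (traj k (s ∘ Fin.castSucc)))
    (k : ℕ) (hk : k = ⌈2 * Real.log (2 * ε₀ / ε) * (supL / μ + σ2 / (μ ^ 2 * ε))⌉₊) :
    ∑ s : Fin k → Fin n, (∏ j, p (s j)) * ‖traj k s - xstar‖ ^ 2 ≤ ε := by
  -- deriving `μ ≤ supL` from `hsc` needs a nonzero vector
  rcases subsingleton_or_nontrivial (EuclideanSpace ℝ (Fin d)) with hE | hE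
  · simpa [Subsingleton.elim (_ - xstar) 0] using hε.le
  have hσ2nn : 0 ≤ σ2 := hσ2 ▸ Finset.sum_nonneg fun i _ => mul_nonneg (hp i) (sq_nonneg _)
  have hlip' (i a b) : ‖gradient (f i) a - gradient (f i) b‖ ≤ supL * ‖a - b‖ :=
    (hlip i a b).trans (by gcongr; exact hLsup i)
  have hgradF (x) : gradient F x = ∑ i, p i • gradient (f i) x := hF ▸ gradient_sum_mul hdiff x
  have hopt : ∑ i, p i • gradient (f i) xstar = 0 :=
    hgradF xstar ▸ gradient_eq_zero_of_forall_le hmin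
  have hμL : μ ≤ supL := le_of_strongly_monotone_of_lipschitz hsc fun a b => by
    simpa only [hgradF] using norm_sum_smul_sub_le hp hps hlip' a b
  have hγ0 := stepSize_pos hμ hε hsupL hσ2nn hγ
  have hγL := stepSize_mul_le hμ hε hsupL hσ2nn hγ
  have hdrift (y) : ∑ i, p i * ‖y - γ • gradient (f i) y - xstar‖ ^ 2
      ≤ (1 - 2 * γ * μ * (1 - γ * supL)) * ‖y - xstar‖ ^ 2 + 2 * γ ^ 2 * σ2 := by
    rw [hσ2]
    refine sum_mul_norm_sgd_step_sub_sq_le hp hps hconv hdiff hsupL hlip' hopt ?_ hγ0.le hγL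
    simpa only [hgradF, hopt, sub_zero] using hsc y xstar
  obtain ⟨hρ0, hρr⟩ := contraction_factor_bounds hγ0.le hμ.le hμL hγL
  have hbound := sum_paths_le_pow_mul_add hp hps (fun y => sq_nonneg ‖y - xstar‖) htraj0 htrajS
    hρ0 hρr (half_pos hε).le (by linarith [stepSize_noise_le hμ hε hsupL hσ2nn hγ]) hdrift k
  have hdecay : (1 - γ * μ) ^ k * ε₀ ≤ ε / 2 := by
    refine one_sub_pow_mul_le (by linarith) (by linarith) (half_pos hε) ?_
    rw [div_div_eq_mul_div, mul_comm ε₀]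
    exact le_stepSize_mul_of_le hμ hε hsupL hσ2nn hγ (hk ▸ Nat.le_ceil _)
  rw [← hε₀] at hbound
  linarith

/-- Corollary 2.2: with step size `γ = με/(2εμ supL + 2σ²)`, after
`k = ⌈2 log(2ε₀/ε) (supL/μ + σ²/(μ²ε))⌉` SGD iterations the expected squared
distance to the optimum is at most `ε`. -/
theorem stmt6 {d n : ℕ} (hn : 0 < n)
    (f : Fin n → EuclideanSpace ℝ (Fin d) → ℝ)
    (L : Fin n → ℝ) (supL μ γ ε ε₀ : ℝ)
    (p : Fin n → ℝ) (hp : ∀ i, 0 ≤ p i) (hps : ∑ i, p i = 1)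
    (hconv : ∀ i, ConvexOn ℝ Set.univ (f i))
    (hdiff : ∀ i, Differentiable ℝ (f i))
    (hlip : ∀ i x y, ‖gradient (f i) x - gradient (f i) y‖ ≤ L i * ‖x - y‖)
    (hLsup : ∀ i, L i ≤ supL) (hsupL : 0 < supL)
    (F : EuclideanSpace ℝ (Fin d) → ℝ) (hF : F = fun x => ∑ i, p i * f i x)
    (hμ : 0 < μ)
    (hsc : ∀ x y, μ * ‖x - y‖ ^ 2 ≤ ⟪x - y, gradient F x - gradient F y⟫)
    (xstar : EuclideanSpace ℝ (Fin d)) (hmin : ∀ x, F xstar ≤ F x)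
    (σ2 : ℝ) (hσ2 : σ2 = ∑ i, p i * ‖gradient (f i) xstar‖ ^ 2)
    (x0 : EuclideanSpace ℝ (Fin d)) (hε₀ : ε₀ = ‖x0 - xstar‖ ^ 2)
    (hε : 0 < ε) (hεsmall : ε < 2 * ε₀)
    (hγ : γ = μ * ε / (2 * ε * μ * supL + 2 * σ2))
    (traj : ∀ k : ℕ, (Fin k → Fin n) → EuclideanSpace ℝ (Fin d))
    (htraj0 : ∀ s, traj 0 s = x0)
    (htrajS : ∀ k (s : Fin (k + 1) → Fin n),
      traj (k + 1) s = traj k (s ∘ Fin.castSucc) -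
        γ • gradient (f (s (Fin.last k))) (traj k (s ∘ Fin.castSucc)))
    (k : ℕ) (hk : k = ⌈2 * Real.log (2 * ε₀ / ε) * (supL / μ + σ2 / (μ ^ 2 * ε))⌉₊) :
    ∑ s : Fin k → Fin n, (∏ j, p (s j)) * ‖traj k s - xstar‖ ^ 2 ≤ ε :=
  stmt6_general f L supL μ γ ε ε₀ p hp hps hconv hdiff hlip hLsup hsupL F hF hμ hsc xstar hmin σ2
    hσ2 x0 hε₀ hε hεsmall hγ traj htraj0 htrajS k hk
end

section
/- Randomized Kaczmarz with uniform row selection, x_{k+1} = x_k + c(b_i - ⟨a_i,x_k⟩)/‖a_i‖²·a_i with i uniform on {1,…,n} and 0 < c < 1, satisfies E‖x_k - x⋆^w‖² ≤ (1 - 2c(1-c)/K(D⁻¹A))^k‖x_0 - x⋆^w‖² + (c/(1-c))K(D⁻¹A)·‖e_w‖²/n, where x⋆^w minimizes (1/2)‖D⁻¹(Ax - b)‖², D = diag(‖a_i‖), e_w = D⁻¹(Ax⋆^w - b), and K(M) = ‖M‖_F²‖(MᵀM)^{-1}‖₂. In particular, uniform-sampling Kaczmarz converges (up to a horizon) to the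 weighted least squares solution. -/
/-!
Put `u i = ‖a i‖⁻¹ • a i` and `β i = b i / ‖a i‖`. The Kaczmarz step for the row `(a i, b i)`
coincides with the one for the unit row `(u i, β i)`, and `x⋆ = x⋆^w` is the least-squares
solution of the normalized system, so its residuals `e i = ⟪u i, x⋆⟫ - β i` satisfy the normal
equations `∑ e i • u i = 0`. Writing `y = x - x⋆`, the expected square error after one step is
therefore exactly `‖y‖² - c (2 - c) 𝔼ᵢ ⟪u i, y⟫² + c² 𝔼ᵢ e i²`. Inverting the frame operator
`T = ∑ u i ⟪u i, ·⟫` and applying Cauchy–Schwarz gives `‖y‖² ≤ K 𝔼ᵢ ⟪u i, y⟫²`, so each step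
contracts the error by `1 - c (2 - c) / K` up to `c² 𝔼ᵢ e i²`. Iterating through the tower of
uniform expectations yields the rate `(1 - c (2 - c) / K)ᵏ ≤ (1 - 2c (1 - c) / K)ᵏ` and the
horizon `c K 𝔼ᵢ e i² / (2 - c) ≤ c K r_w / (1 - c)`.
-/

open scoped RealInnerProductSpace BigOperators

open Finset

lemma Fintype.expect_fin_succ_pi {α M : Type*} [Fintype α] [AddCommMonoid M] [Module ℚ≥0 M]
    {k : ℕ} (f : (Fin (k + 1) → α) → M) :
    𝔼 s, f s = 𝔼 s : Fin k → α, 𝔼 i, f (Fin.snoc s i) := by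
  rw [← Fintype.expect_equiv ((Equiv.prodComm _ _).trans (Fin.snocEquiv fun _ => α))
    (fun p => f (Fin.snoc p.1 p.2)) f (fun _ => rfl), ← univ_product_univ]
  exact expect_product' univ univ fun s i => f (Fin.snoc s i)

lemma sum_prod_inv_card_mul_eq_expect {α : Type*} [Fintype α] {k : ℕ}
    (f : (Fin k → α) → ℝ) :
    ∑ s, (∏ _j : Fin k, 1 / (Fintype.card α : ℝ)) * f s = 𝔼 s, f s := by
  rw [Fintype.expect_eq_sum_div_card, Fintype.card_fun, sum_div]
  simp [div_eq_inv_mul]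

lemma expect_iterate_succ_le {α X : Type*} [Fintype α] [Nonempty α] (step : α → X → X)
    (traj : ∀ k, (Fin k → α) → X)
    (htraj : ∀ k (s : Fin (k + 1) → α),
      traj (k + 1) s = step (s (Fin.last k)) (traj k (s ∘ Fin.castSucc)))
    {V : X → ℝ} {q r : ℝ} (hV : ∀ x, 𝔼 i, V (step i x) ≤ q * V x + r) (k : ℕ) :
    𝔼 s, V (traj (k + 1) s) ≤ q * 𝔼 s, V (traj k s) + r := calc
  𝔼 s, V (traj (k + 1) s) = 𝔼 s, 𝔼 i, V (step i (traj k s)) := by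
    simp only [Fintype.expect_fin_succ_pi, htraj, Fin.snoc_last, Fin.snoc_comp_castSucc]
  _ ≤ 𝔼 s, (q * V (traj k s) + r) := expect_le_expect fun s _ => hV _
  _ = q * 𝔼 s, V (traj k s) + r := by
    rw [expect_add_distrib, mul_expect, Fintype.expect_const]

lemma le_pow_mul_add_of_le_mul_add {a : ℕ → ℝ} {q r H : ℝ} (hq : 0 ≤ q) (hH0 : 0 ≤ H)
    (hH : q * H + r ≤ H) (h : ∀ k, a (k + 1) ≤ q * a k + r) (k : ℕ) :
    a k ≤ q ^ k * a 0 + H := by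
  induction k with
  | zero => simpa using hH0
  | succ k ih => calc
      a (k + 1) ≤ q * (q ^ k * a 0 + H) + r := (h k).trans (by gcongr)
      _ ≤ q ^ (k + 1) * a 0 + H := by rw [pow_succ]; linarith

lemma one_sub_mul_two_sub_div_nonneg {c K : ℝ} (hK : 1 ≤ K) : 0 ≤ 1 - c * (2 - c) / K := by
  rw [sub_nonneg, div_le_one (by linarith)]
  nlinarith [sq_nonneg (c - 1)]

lemma eq_zero_of_forall_mul_add_sq_mul_nonneg {A B : ℝ} (h : ∀ t : ℝ, 0 ≤ t * A + t ^ 2 * B) :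
    A = 0 := by
  have hderiv : HasDerivAt (fun t : ℝ => t * A + t ^ 2 * B) A 0 := by
    simpa using
      ((hasDerivAt_id (0 : ℝ)).mul_const A).fun_add ((hasDerivAt_pow 2 (0 : ℝ)).mul_const B)
  refine IsLocalMin.hasDerivAt_eq_zero (Filter.Eventually.of_forall fun t => ?_) hderiv
  simpa using h t

section InnerProductSpace

variable {E ι : Type*} [NormedAddCommGroup E] [InnerProductSpace ℝ E] [Fintype ι]

lemma sum_residual_mul_inner_eq_zero {u : ι → E} {β : ι → ℝ} {xstar : E}
    (hmin : ∀ x, ∑ i, (⟪u i, xstar⟫ - β i) ^ 2 ≤ ∑ i, (⟪u i, x⟫ - β i) ^ 2) (y : E) :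
    ∑ i, (⟪u i, xstar⟫ - β i) * ⟪u i, y⟫ = 0 := by
  have hquad : ∀ t : ℝ, 0 ≤ t * (2 * ∑ i, (⟪u i, xstar⟫ - β i) * ⟪u i, y⟫) +
      t ^ 2 * ∑ i, ⟪u i, y⟫ ^ 2 := fun t => by
    have hexpand : ∑ i, (⟪u i, xstar + t • y⟫ - β i) ^ 2 = ∑ i, (⟪u i, xstar⟫ - β i) ^ 2 +
        (t * (2 * ∑ i, (⟪u i, xstar⟫ - β i) * ⟪u i, y⟫) + t ^ 2 * ∑ i, ⟪u i, y⟫ ^ 2) := by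
      simp only [inner_add_right, real_inner_smul_right, mul_sum, ← sum_add_distrib]
      exact sum_congr rfl fun i _ => by ring
    linarith [hmin (xstar + t • y)]
  linarith [eq_zero_of_forall_mul_add_sq_mul_nonneg hquad]

lemma inner_sum_inner_smul_left (u : ι → E) (x y : E) :
    ⟪∑ i, ⟪u i, x⟫ • u i, y⟫ = ∑ i, ⟪u i, x⟫ * ⟪u i, y⟫ := by
  simp only [sum_inner, real_inner_smul_left]

lemma norm_sq_le_opNorm_mul_sum_inner_sq {u : ι → E} {T S : E →L[ℝ] E}
    (hT : ∀ x, T x = ∑ i, ⟪u i, x⟫ • u i) (hTS : T.comp S = ContinuousLinearMap.id ℝ E) (y : E) :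
    ‖y‖ ^ 2 ≤ ‖S‖ * ∑ i, ⟪u i, y⟫ ^ 2 := by
  set z := S y
  have hTz : T z = y := congrArg (fun L : E →L[ℝ] E => L y) hTS
  have hy : ‖y‖ ^ 2 = ∑ i, ⟪u i, z⟫ * ⟪u i, y⟫ := by
    rw [← real_inner_self_eq_norm_sq, ← inner_sum_inner_smul_left, ← hT, hTz]
  have hz : ∑ i, ⟪u i, z⟫ ^ 2 ≤ ‖S‖ * ‖y‖ ^ 2 := calc
    ∑ i, ⟪u i, z⟫ ^ 2 = ⟪y, z⟫ := by simp only [sq, ← inner_sum_inner_smul_left, ← hT, hTz]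
    _ ≤ ‖y‖ * ‖z‖ := real_inner_le_norm y z
    _ ≤ ‖y‖ * (‖S‖ * ‖y‖) := by gcongr; exact S.le_opNorm y
    _ = ‖S‖ * ‖y‖ ^ 2 := by ring
  have hCS := sum_mul_sq_le_sq_mul_sq univ (fun i => ⟪u i, z⟫) (fun i => ⟪u i, y⟫)
  rw [← hy] at hCS
  rcases (sq_nonneg ‖y‖).eq_or_lt with h0 | hpos
  · rw [← h0]; positivity
  · have hQ : 0 ≤ ∑ i, ⟪u i, y⟫ ^ 2 := sum_nonneg fun i _ => sq_nonneg _
    nlinarith [mul_le_mul_of_nonneg_right hz hQ]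

noncomputable def kaczmarzStep (c : ℝ) (a : E) (b : ℝ) (x : E) : E :=
  x + c • ((b - ⟪a, x⟫) / ‖a‖ ^ 2) • a

lemma kaczmarzStep_normalize (c : ℝ) (a : E) (b : ℝ) :
    kaczmarzStep c (‖a‖⁻¹ • a) (b / ‖a‖) = kaczmarzStep c a b := by
  funext x
  rcases eq_or_ne a 0 with rfl | ha
  · simp [kaczmarzStep]
  · have hna : ‖a‖ ≠ 0 := norm_ne_zero_iff.mpr ha
    rw [kaczmarzStep, kaczmarzStep, norm_smul, norm_inv, norm_norm, inv_mul_cancel₀ hna,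
      real_inner_smul_left]
    simp only [smul_smul]
    congr 2
    field_simp

section UnitRows

variable {c β : ℝ} {u : E}

lemma kaczmarzStep_sub_eq (hu : ‖u‖ = 1) (x xstar : E) :
    kaczmarzStep c u β x - xstar =
      (x - xstar) - (c * (⟪u, x - xstar⟫ + (⟪u, xstar⟫ - β))) • u := by
  simp only [kaczmarzStep, hu, inner_sub_right]
  module

lemma norm_kaczmarzStep_sub_sq (hu : ‖u‖ = 1) (x xstar : E) :
    ‖kaczmarzStep c u β x - xstar‖ ^ 2 = ‖x - xstar‖ ^ 2 - c * (2 - c) * ⟪u, x - xstar⟫ ^ 2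
      - 2 * c * (1 - c) * ((⟪u, xstar⟫ - β) * ⟪u, x - xstar⟫) + c ^ 2 * (⟪u, xstar⟫ - β) ^ 2 := by
  rw [kaczmarzStep_sub_eq hu, norm_sub_sq_real, real_inner_smul_right, norm_smul, hu,
    Real.norm_eq_abs, mul_one, sq_abs, real_inner_comm]
  ring

end UnitRows

section Expectation

variable [Nonempty ι] {c K : ℝ} {u : ι → E} {β : ι → ℝ} {xstar : E}

lemma expect_norm_kaczmarzStep_sub_sq (hu : ∀ i, ‖u i‖ = 1)
    (hopt : ∀ y, ∑ i, (⟪u i, xstar⟫ - β i) * ⟪u i, y⟫ = 0) (x : E) :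
    𝔼 i, ‖kaczmarzStep c (u i) (β i) x - xstar‖ ^ 2 = ‖x - xstar‖ ^ 2
      - c * (2 - c) * 𝔼 i, ⟪u i, x - xstar⟫ ^ 2 + c ^ 2 * 𝔼 i, (⟪u i, xstar⟫ - β i) ^ 2 := by
  have hcross : 𝔼 i, (⟪u i, xstar⟫ - β i) * ⟪u i, x - xstar⟫ = 0 := by
    rw [Fintype.expect_eq_sum_div_card, hopt, zero_div]
  simp only [norm_kaczmarzStep_sub_sq (hu _), expect_add_distrib, expect_sub_distrib,
    ← mul_expect, hcross, Fintype.expect_const]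
  ring

lemma one_le_of_forall_norm_sq_le_mul_expect (hu : ∀ i, ‖u i‖ = 1)
    (hframe : ∀ y, ‖y‖ ^ 2 ≤ K * 𝔼 i, ⟪u i, y⟫ ^ 2) : 1 ≤ K := by
  obtain ⟨j⟩ := ‹Nonempty ι›
  have hle : 𝔼 i, ⟪u i, u j⟫ ^ 2 ≤ 1 := Finset.expect_le univ_nonempty fun i _ => by
    have := abs_real_inner_le_norm (u i) (u j)
    rw [hu, hu, one_mul] at this
    nlinarith [abs_nonneg ⟪u i, u j⟫, sq_abs ⟪u i, u j⟫]
  have hnonneg : 0 ≤ 𝔼 i, ⟪u i, u j⟫ ^ 2 := expect_nonneg fun i _ => sq_nonneg _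
  have hframe_j := hframe (u j)
  rw [hu, one_pow] at hframe_j
  rcases le_or_gt K 0 with hK | hK
  · nlinarith [mul_nonpos_of_nonpos_of_nonneg hK hnonneg]
  · nlinarith [mul_le_mul_of_nonneg_left hle hK.le]

lemma expect_norm_kaczmarzStep_sub_sq_le (hu : ∀ i, ‖u i‖ = 1)
    (hopt : ∀ y, ∑ i, (⟪u i, xstar⟫ - β i) * ⟪u i, y⟫ = 0)
    (hframe : ∀ y, ‖y‖ ^ 2 ≤ K * 𝔼 i, ⟪u i, y⟫ ^ 2) (hc0 : 0 ≤ c) (hc2 : c ≤ 2) (x : E) :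
    𝔼 i, ‖kaczmarzStep c (u i) (β i) x - xstar‖ ^ 2 ≤
      (1 - c * (2 - c) / K) * ‖x - xstar‖ ^ 2 + c ^ 2 * 𝔼 i, (⟪u i, xstar⟫ - β i) ^ 2 := by
  have hK : 0 < K := one_pos.trans_le (one_le_of_forall_norm_sq_le_mul_expect hu hframe)
  have hdiv : ‖x - xstar‖ ^ 2 / K ≤ 𝔼 i, ⟪u i, x - xstar⟫ ^ 2 :=
    div_le_of_le_mul₀ hK.le (expect_nonneg fun i _ => sq_nonneg _)
      (by rw [mul_comm]; exact hframe _)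
  have hc : 0 ≤ c * (2 - c) := mul_nonneg hc0 (by linarith)
  rw [expect_norm_kaczmarzStep_sub_sq hu hopt, sub_mul, one_mul, div_mul_eq_mul_div, mul_div_assoc]
  linarith [mul_le_mul_of_nonneg_left hdiv hc]

theorem expect_norm_kaczmarz_iterate_sub_sq_le (hu : ∀ i, ‖u i‖ = 1)
    (hopt : ∀ y, ∑ i, (⟪u i, xstar⟫ - β i) * ⟪u i, y⟫ = 0)
    (hframe : ∀ y, ‖y‖ ^ 2 ≤ K * 𝔼 i, ⟪u i, y⟫ ^ 2) (hc0 : 0 ≤ c) (hc2 : c < 2)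
    (x0 : E) (traj : ∀ k, (Fin k → ι) → E) (htraj0 : ∀ s, traj 0 s = x0)
    (htraj : ∀ k (s : Fin (k + 1) → ι), traj (k + 1) s =
      kaczmarzStep c (u (s (Fin.last k))) (β (s (Fin.last k))) (traj k (s ∘ Fin.castSucc)))
    (k : ℕ) :
    𝔼 s, ‖traj k s - xstar‖ ^ 2 ≤ (1 - c * (2 - c) / K) ^ k * ‖x0 - xstar‖ ^ 2 +
      c / (2 - c) * K * 𝔼 i, (⟪u i, xstar⟫ - β i) ^ 2 := by
  set r := 𝔼 i, (⟪u i, xstar⟫ - β i) ^ 2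
  have hK : 1 ≤ K := one_le_of_forall_norm_sq_le_mul_expect hu hframe
  have hr : 0 ≤ r := expect_nonneg fun i _ => sq_nonneg _
  have h2c : 0 < 2 - c := by linarith
  have hq : 0 ≤ 1 - c * (2 - c) / K := one_sub_mul_two_sub_div_nonneg hK
  -- the horizon `c K r / (2 - c)` is the fixed point of `h ↦ (1 - c (2 - c) / K) h + c² r`
  have hfix : (1 - c * (2 - c) / K) * (c / (2 - c) * K * r) + c ^ 2 * r = c / (2 - c) * K * r := by
    field_simp
    ring
  have hstep := expect_iterate_succ_le _ traj htraj (V := fun x => ‖x - xstar‖ ^ 2)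
    (expect_norm_kaczmarzStep_sub_sq_le hu hopt hframe hc0 hc2.le)
  simpa [htraj0] using le_pow_mul_add_of_le_mul_add (a := fun k => 𝔼 s, ‖traj k s - xstar‖ ^ 2)
    hq (by positivity) hfix.le hstep k

end Expectation

end InnerProductSpace

theorem stmt16_general {d n : ℕ} (hn : 0 < n)
    (a : Fin n → EuclideanSpace ℝ (Fin d)) (b : Fin n → ℝ)
    (ha : ∀ i, a i ≠ 0) (c : ℝ) (hc0 : 0 < c) (hc1 : c < 1)
    (u : Fin n → EuclideanSpace ℝ (Fin d)) (hu : ∀ i, u i = ‖a i‖⁻¹ • a i)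
    (Tw Sw : EuclideanSpace ℝ (Fin d) →L[ℝ] EuclideanSpace ℝ (Fin d))
    (hTw : ∀ x, Tw x = ∑ i, ⟪u i, x⟫ • u i)
    (hTS : Tw.comp Sw = ContinuousLinearMap.id ℝ _)
    (K : ℝ) (hK : K = (∑ i, ‖u i‖ ^ 2) * ‖Sw‖)
    (Fw : EuclideanSpace ℝ (Fin d) → ℝ)
    (hFw : ∀ x, Fw x = (1 / 2) * ∑ i, ((⟪a i, x⟫ - b i) / ‖a i‖) ^ 2)
    (xstarw : EuclideanSpace ℝ (Fin d)) (hmin : ∀ x, Fw xstarw ≤ Fw x)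
    (rw : ℝ) (hrw : rw = (∑ i, ((⟪a i, xstarw⟫ - b i) / ‖a i‖) ^ 2) / (n : ℝ))
    (x0 : EuclideanSpace ℝ (Fin d))
    (traj : ∀ k : ℕ, (Fin k → Fin n) → EuclideanSpace ℝ (Fin d))
    (htraj0 : ∀ s, traj 0 s = x0)
    (htrajS : ∀ k (s : Fin (k + 1) → Fin n),
      traj (k + 1) s = traj k (s ∘ Fin.castSucc) +
        c • (((b (s (Fin.last k)) - ⟪a (s (Fin.last k)), traj k (s ∘ Fin.castSucc)⟫) /
          ‖a (s (Fin.last k))‖ ^ 2) • a (s (Fin.last k)))) :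
    ∀ k : ℕ,
      ∑ s : Fin k → Fin n, (∏ _j : Fin k, (1 / (n : ℝ))) * ‖traj k s - xstarw‖ ^ 2 ≤
        (1 - 2 * c * (1 - c) / K) ^ k * ‖x0 - xstarw‖ ^ 2 + (c / (1 - c)) * K * rw := by
  intro k
  have : Nonempty (Fin n) := ⟨⟨0, hn⟩⟩
  have hun : ∀ i, ‖u i‖ = 1 := fun i => by
    rw [hu, norm_smul, norm_inv, norm_norm, inv_mul_cancel₀ (norm_ne_zero_iff.mpr (ha i))]
  set β : Fin n → ℝ := fun i => b i / ‖a i‖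
  have hres : ∀ x i, (⟪a i, x⟫ - b i) / ‖a i‖ = ⟪u i, x⟫ - β i := fun x i => by
    rw [hu, real_inner_smul_left]; ring
  have hopt := sum_residual_mul_inner_eq_zero (u := u) (β := β) (xstar := xstarw)
    fun x => by simpa [hFw, hres] using hmin x
  have hframe : ∀ y, ‖y‖ ^ 2 ≤ K * 𝔼 i, ⟪u i, y⟫ ^ 2 := fun y => calc
    ‖y‖ ^ 2 ≤ ‖Sw‖ * ∑ i, ⟪u i, y⟫ ^ 2 := norm_sq_le_opNorm_mul_sum_inner_sq hTw hTS y
    _ = K * 𝔼 i, ⟪u i, y⟫ ^ 2 := by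
      rw [hK, Fintype.expect_eq_sum_div_card]
      simp only [hun, one_pow, sum_const, card_univ, Fintype.card_fin, nsmul_eq_mul, mul_one]
      field_simp
  have hrw' : rw = 𝔼 i, (⟪u i, xstarw⟫ - β i) ^ 2 := by
    simp [hrw, hres, Fintype.expect_eq_sum_div_card]
  have hK1 : 1 ≤ K := one_le_of_forall_norm_sq_le_mul_expect hun hframe
  have hr : 0 ≤ rw := hrw' ▸ expect_nonneg fun i _ => sq_nonneg _
  calc _ = 𝔼 s, ‖traj k s - xstarw‖ ^ 2 := by
        simpa using sum_prod_inv_card_mul_eq_expect (α := Fin n) fun s => ‖traj k s - xstarw‖ ^ 2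
    _ ≤ (1 - c * (2 - c) / K) ^ k * ‖x0 - xstarw‖ ^ 2 + c / (2 - c) * K * rw := hrw' ▸
        expect_norm_kaczmarz_iterate_sub_sq_le hun hopt hframe hc0.le (by linarith) x0 traj htraj0
          (fun k s => by rw [htrajS, hu, kaczmarzStep_normalize]; rfl) k
    _ ≤ _ := by
        gcongr ?_ ^ _ * _ + ?_ * _ * _
        · exact one_sub_mul_two_sub_div_nonneg hK1
        · exact sub_le_sub_left (div_le_div_of_nonneg_right (by nlinarith) (by linarith)) 1
        · exact div_le_div_of_nonneg_left hc0.le (by linarith) (by linarith)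

/-- Corollary 5.2: randomized Kaczmarz with *uniform* row selection and step size
`0 < c < 1` converges linearly (up to a horizon) to the *weighted* least-squares
solution `x⋆^w = argmin (1/2)‖D⁻¹(Ax-b)‖²`, where `D = diag(‖a_i‖)`.  The rows of
`D⁻¹A` are the unit vectors `u_i = a_i/‖a_i‖`, `K(D⁻¹A) = ‖D⁻¹A‖_F² ‖((D⁻¹A)ᵀD⁻¹A)⁻¹‖₂`
is represented via the map `Sw` inverting `Tw : x ↦ ∑ ⟨u_i,x⟩ u_i`, and
`r_w = ‖e_w‖²/n` with `e_w = D⁻¹(A x⋆^w - b)`. -/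
theorem stmt16 {d n : ℕ} (hn : 0 < n)
    (a : Fin n → EuclideanSpace ℝ (Fin d)) (b : Fin n → ℝ)
    (ha : ∀ i, a i ≠ 0) (c : ℝ) (hc0 : 0 < c) (hc1 : c < 1)
    (u : Fin n → EuclideanSpace ℝ (Fin d)) (hu : ∀ i, u i = ‖a i‖⁻¹ • a i)
    (Tw Sw : EuclideanSpace ℝ (Fin d) →L[ℝ] EuclideanSpace ℝ (Fin d))
    (hTw : ∀ x, Tw x = ∑ i, ⟪u i, x⟫ • u i)
    (hTS : Tw.comp Sw = ContinuousLinearMap.id ℝ _)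
    (hST : Sw.comp Tw = ContinuousLinearMap.id ℝ _)
    (K : ℝ) (hK : K = (∑ i, ‖u i‖ ^ 2) * ‖Sw‖)
    (Fw : EuclideanSpace ℝ (Fin d) → ℝ)
    (hFw : ∀ x, Fw x = (1 / 2) * ∑ i, ((⟪a i, x⟫ - b i) / ‖a i‖) ^ 2)
    (xstarw : EuclideanSpace ℝ (Fin d)) (hmin : ∀ x, Fw xstarw ≤ Fw x)
    (rw : ℝ) (hrw : rw = (∑ i, ((⟪a i, xstarw⟫ - b i) / ‖a i‖) ^ 2) / (n : ℝ))
    (x0 : EuclideanSpace ℝ (Fin d))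
    (traj : ∀ k : ℕ, (Fin k → Fin n) → EuclideanSpace ℝ (Fin d))
    (htraj0 : ∀ s, traj 0 s = x0)
    (htrajS : ∀ k (s : Fin (k + 1) → Fin n),
      traj (k + 1) s = traj k (s ∘ Fin.castSucc) +
        c • (((b (s (Fin.last k)) - ⟪a (s (Fin.last k)), traj k (s ∘ Fin.castSucc)⟫) /
          ‖a (s (Fin.last k))‖ ^ 2) • a (s (Fin.last k)))) :
    ∀ k : ℕ,
      ∑ s : Fin k → Fin n, (∏ _j : Fin k, (1 / (n : ℝ))) * ‖traj k s - xstarw‖ ^ 2 ≤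
        (1 - 2 * c * (1 - c) / K) ^ k * ‖x0 - xstarw‖ ^ 2 + (c / (1 - c)) * K * rw :=
  stmt16_general hn a b ha c hc0 hc1 u hu Tw Sw hTw hTS K hK Fw hFw xstarw hmin rw hrw x0 traj
    htraj0 htrajS
end
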